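/- arXiv:1903.04954 — 3 statements merged into one kernel-verified Lean document; each statement's English description precedes it below -/
import Mathlib

section
/- Under the steady-state solution, the application probability a_i := ∑_{j ∈ Γ_i} q_j · (1 - (1-v)^{k_j}) / k_j equals χ h̄_{Γ_i} k_i, and hence satisfies the balance condition h_i · a_i = λ · p_i. -/
/-!
Each neighbour `j` of `i` contributes `q_j (1 - (1-v)^{k_j}) / k_j = χ h_j`: the matching
probability `1 - (1-v)^{k_j}` and the degree `k_j` in the definition of `q_j` cancel, which is
possible because a neighbour has positive degree. Summing over `Γ_i` gives `χ ∑_{j ∈ Γ_i} h_j =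
χ h̄_{Γ_i} k_i`, and multiplying by `h_i` gives `λ p_i` from the definition of `p_i`.
-/

open Finset

lemma one_sub_one_sub_pow_ne_zero {v : ℝ} (hv : v ∈ Set.Ioo (0 : ℝ) 1) {k : ℕ} (hk : k ≠ 0) :
    1 - (1 - v) ^ k ≠ 0 :=
  (sub_pos.mpr (pow_lt_one₀ (by linarith [hv.2]) (by linarith [hv.1]) hk)).ne'

namespace SimpleGraph

variable {V : Type*} [Fintype V] (G : SimpleGraph V) [DecidableRel G.Adj]

lemma degree_ne_zero_of_mem_neighborFinset {i j : V} (hj : j ∈ G.neighborFinset i) :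
    G.degree j ≠ 0 :=
  ((G.degree_pos_iff_exists_adj j).mpr ⟨i, ((G.mem_neighborFinset i j).mp hj).symm⟩).ne'

/-- At an isolated vertex the sum is empty (and `1 / 0 = 0`), so both sides vanish. -/
lemma one_div_degree_mul_sum_neighborFinset_mul_degree (f : V → ℝ) (i : V) :
    (1 / (G.degree i : ℝ)) * (∑ j ∈ G.neighborFinset i, f j) * (G.degree i : ℝ) =
      ∑ j ∈ G.neighborFinset i, f j := by
  by_cases hi : G.degree i = 0
  · rw [← card_neighborFinset_eq_degree, card_eq_zero] at hi
    simp [hi]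
  · field_simp

end SimpleGraph

theorem stmt_4_general {N : ℕ} (G : SimpleGraph (Fin N)) [DecidableRel G.Adj]
    (lam v χ : ℝ) (hlam : lam ∈ Set.Ioo (0:ℝ) 1) (hv : v ∈ Set.Ioo (0:ℝ) 1)
    (h : Fin N → ℝ)
    (hbar : Fin N → ℝ)
    (hhbar : ∀ i, hbar i = (1 / (G.degree i : ℝ)) * ∑ j ∈ G.neighborFinset i, h j)
    (p q a : Fin N → ℝ)
    (hp : ∀ i, p i = χ * h i * hbar i * (G.degree i : ℝ) / lam)
    (hq : ∀ i, q i = χ * h i * (G.degree i : ℝ) / (1 - (1 - v) ^ (G.degree i)))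
    (ha : ∀ i, a i = ∑ j ∈ G.neighborFinset i,
      q j * (1 - (1 - v) ^ (G.degree j)) / (G.degree j : ℝ)) :
    (∀ i, a i = χ * hbar i * (G.degree i : ℝ)) ∧
    (∀ i, h i * a i = lam * p i) := by
  have hflow : ∀ i, ∀ j ∈ G.neighborFinset i,
      q j * (1 - (1 - v) ^ (G.degree j)) / (G.degree j : ℝ) = χ * h j := by
    intro i j hj
    have hk := G.degree_ne_zero_of_mem_neighborFinset hj
    rw [hq j]
    field_simp [one_sub_one_sub_pow_ne_zero hv hk, hk]
  have happ : ∀ i, a i = χ * hbar i * (G.degree i : ℝ) := by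
    intro i
    rw [ha i, sum_congr rfl (hflow i), ← mul_sum, hhbar i, mul_assoc,
      G.one_div_degree_mul_sum_neighborFinset_mul_degree]
  refine ⟨happ, fun i => ?_⟩
  rw [happ i, hp i]
  field_simp [hlam.1.ne']

theorem stmt_4 {N : ℕ} (G : SimpleGraph (Fin N)) [DecidableRel G.Adj]
    (lam v χ : ℝ) (hlam : lam ∈ Set.Ioo (0:ℝ) 1) (hv : v ∈ Set.Ioo (0:ℝ) 1)
    (h : Fin N → ℝ) (hh : ∀ i, h i ∈ Set.Ioc (0:ℝ) 1)
    (hdeg : ∀ i, 1 ≤ G.degree i)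
    (hbar : Fin N → ℝ)
    (hhbar : ∀ i, hbar i = (1 / (G.degree i : ℝ)) * ∑ j ∈ G.neighborFinset i, h j)
    (p q a : Fin N → ℝ)
    (hp : ∀ i, p i = χ * h i * hbar i * (G.degree i : ℝ) / lam)
    (hq : ∀ i, q i = χ * h i * (G.degree i : ℝ) / (1 - (1 - v) ^ (G.degree i)))
    (ha : ∀ i, a i = ∑ j ∈ G.neighborFinset i,
      q j * (1 - (1 - v) ^ (G.degree j)) / (G.degree j : ℝ)) :
    (∀ i, a i = χ * hbar i * (G.degree i : ℝ)) ∧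
    (∀ i, h i * a i = lam * p i) :=
  stmt_4_general G lam v χ hlam hv h hbar hhbar p q a hp hq ha
end

section
/- Let φ, ψ, b, y, c̄ > 0 and k > 0, and for x ≥ 0 define F(x) = (φ_c b - sqrt(φ_c² b² + 2 φ_c ψ c̄ b y x k)) / (-2 φ_c c̄ x k) for x > 0, where φ_c, c̄ > 0 are fixed constants (with φ_c playing the role of φ and c̄ of the normalization φ). Then F extends continuously to x = 0 with F(0) = ψ y / (2 φ_c), F is strictly decreasing in x on [0,∞), and F(x) > 0 for all x ≥ 0. -/
/-! Multiplying numerator and denominator by the conjugate `A + √(A² + B x)`, with `A = φ_c b`,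
turns `F` into `B / (C (A + √(A² + B x)))` for suitable positive constants `B, C`. This form has
no singularity at `x = 0`, takes the value `ψ y / (2 φ_c)` there, is positive, and decreases
because its denominator increases with `x`. -/

open Set

section Conjugate

variable {A B C : ℝ}

theorem sub_sqrt_div_neg_mul_eq {x : ℝ} (hrad : 0 ≤ A ^ 2 + B * x) (hC : C ≠ 0) (hx : x ≠ 0)
    (hden : A + √(A ^ 2 + B * x) ≠ 0) :
    (A - √(A ^ 2 + B * x)) / -(C * x) = B / (C * (A + √(A ^ 2 + B * x))) := by
  rw [div_eq_div_iff (neg_ne_zero.mpr (mul_ne_zero hC hx)) (mul_ne_zero hC hden)]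
  linear_combination (-C) * Real.sq_sqrt hrad

theorem add_sqrt_pos (hA : 0 < A) (x : ℝ) : 0 < A + √(A ^ 2 + B * x) :=
  add_pos_of_pos_of_nonneg hA (Real.sqrt_nonneg _)

theorem continuous_div_mul_add_sqrt (hA : 0 < A) (hC : C ≠ 0) :
    Continuous fun x => B / (C * (A + √(A ^ 2 + B * x))) :=
  continuous_const.div (by fun_prop) fun x => mul_ne_zero hC (add_sqrt_pos hA x).ne'

theorem div_mul_add_sqrt_pos (hA : 0 < A) (hB : 0 < B) (hC : 0 < C) (x : ℝ) :
    0 < B / (C * (A + √(A ^ 2 + B * x))) :=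
  div_pos hB (mul_pos hC (add_sqrt_pos hA x))

theorem strictAntiOn_div_mul_add_sqrt (hA : 0 < A) (hB : 0 < B) (hC : 0 < C) :
    StrictAntiOn (fun x => B / (C * (A + √(A ^ 2 + B * x)))) (Ici 0) := by
  intro u hu v _ huv
  have hsqrt : √(A ^ 2 + B * u) < √(A ^ 2 + B * v) :=
    Real.sqrt_lt_sqrt (by have := mem_Ici.mp hu; positivity) (by gcongr)
  apply div_lt_div_of_pos_left hB (mul_pos hC (add_sqrt_pos hA u))
  gcongr

end Conjugate

theorem stmt_10 (phic psi b y cbar k : ℝ)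
    (hphic : 0 < phic) (hpsi : 0 < psi) (hb : 0 < b) (hy : 0 < y)
    (hcbar : 0 < cbar) (hk : 0 < k)
    (F : ℝ → ℝ)
    (hF0 : F 0 = psi * y / (2 * phic))
    (hFpos : ∀ x : ℝ, 0 < x →
      F x = (phic * b - Real.sqrt (phic ^ 2 * b ^ 2 + 2 * phic * psi * cbar * b * y * x * k))
              / (-2 * phic * cbar * x * k)) :
    ContinuousOn F (Set.Ici (0:ℝ)) ∧
    StrictAntiOn F (Set.Ici (0:ℝ)) ∧
    (∀ x : ℝ, 0 ≤ x → 0 < F x) := by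
  have hA : 0 < phic * b := by positivity
  have hB : 0 < 2 * phic * psi * cbar * b * y * k := by positivity
  have hC : 0 < 2 * phic * cbar * k := by positivity
  have hF : EqOn F (fun x => 2 * phic * psi * cbar * b * y * k /
      (2 * phic * cbar * k * (phic * b + √((phic * b) ^ 2 + 2 * phic * psi * cbar * b * y * k * x))))
      (Ici 0) := by
    intro x hx
    dsimp only
    rcases (mem_Ici.mp hx).eq_or_lt with rfl | hx
    · rw [hF0, mul_zero, add_zero, Real.sqrt_sq hA.le]
      field_simp
      ring
    · rw [hFpos x hx, show -2 * phic * cbar * x * k = -(2 * phic * cbar * k * x) by ring,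
        show phic ^ 2 * b ^ 2 + 2 * phic * psi * cbar * b * y * x * k
          = (phic * b) ^ 2 + 2 * phic * psi * cbar * b * y * k * x by ring]
      exact sub_sqrt_div_neg_mul_eq (by positivity) hC.ne' hx.ne' (add_sqrt_pos hA x).ne'
  refine ⟨(continuous_div_mul_add_sqrt hA hC.ne').continuousOn.congr hF,
    (strictAntiOn_div_mul_add_sqrt hA hB hC).congr hF.symm, fun x hx => ?_⟩
  rw [hF hx]
  exact div_mul_add_sqrt_pos hA hB hC x
end

section
/- The map T: [0,1]^N → [0,1]^N defined componentwise by T_i(h) = min(1, (φb - sqrt(φ²b² + 2φψ φ_norm b y h̄_i(h) k_i)) / (-2φ φ_norm h̄_i(h) k_i)) when h̄_i(h) > 0 and T_i(h) = min(1, ψy/(2φ)) when h̄_i(h) = 0, where h̄_i(h) = (1/k_i)∑_j A_{ij} h_j, is continuous, and therefore has a fixed point in [0,1]^N. -/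
/-!
No fixed-point theorem is needed: the game is a potential game. Writing `ρ` for the best response
to a neighbourhood total `S`, `ρ` solves `α = β ρ + S ρ²`, so `ρ(S)` is the unique maximiser of
`F(s) - s S` with `F(s) = -α/s - β log s` (the payoff increases up to the root and decreases after
it). A unilateral change of `hᵢ` changes `Φ(h) = ∑ F(hᵢ) - ½ hᵀAh` exactly as it changes firm `i`'s
payoff, `A` being symmetric with zero diagonal. Hence a maximiser of the continuous `Φ` on the compact
box `[δ, 1]ᴺ`, where `δ = min 1 (ρ N) > 0` keeps `F` away from its singularity and does not bind,
is a fixed point of `T`. On the unit cube `T h i = min 1 (ρ (∑_{j ~ i} h j))`, which is continuous.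
-/

open Finset Matrix Set Real

/-- The best response `(φb - √(φ²b² + 2φψφₙbyt)) / (-2φφₙt)`, `t = h̄ᵢkᵢ`, with its numerator
rationalised; this removes the singularity at `t = 0`. -/
noncomputable def bestResponse (φ ψ b y φn t : ℝ) : ℝ :=
  ψ * b * y / (√(φ ^ 2 * b ^ 2 + 2 * φ * ψ * φn * b * y * t) + φ * b)

section BestResponse

variable {φ ψ b y φn : ℝ}

lemma bestResponse_pos (hφ : 0 < φ) (hψ : 0 < ψ) (hb : 0 < b) (hy : 0 < y) (t : ℝ) :
    0 < bestResponse φ ψ b y φn t := by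
  unfold bestResponse
  positivity

lemma continuous_bestResponse (hφ : 0 < φ) (hb : 0 < b) :
    Continuous (bestResponse φ ψ b y φn) :=
  continuous_const.div (by fun_prop) fun t => by positivity

lemma antitone_bestResponse (hφ : 0 < φ) (hψ : 0 < ψ) (hb : 0 < b) (hy : 0 < y) (hφn : 0 < φn) :
    Antitone (bestResponse φ ψ b y φn) := by
  intro s t hst
  unfold bestResponse
  gcongr

lemma bestResponse_zero (hφ : 0 < φ) (hb : 0 < b) :
    bestResponse φ ψ b y φn 0 = ψ * y / (2 * φ) := by
  rw [bestResponse, mul_zero, add_zero, ← mul_pow, sqrt_sq (by positivity)]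
  field_simp
  ring

lemma div_eq_bestResponse (hφ : 0 < φ) (hb : 0 < b) (hφn : φn ≠ 0) {u k : ℝ} (huk : u * k ≠ 0)
    (hA : 0 ≤ φ ^ 2 * b ^ 2 + 2 * φ * ψ * φn * b * y * u * k) :
    (φ * b - √(φ ^ 2 * b ^ 2 + 2 * φ * ψ * φn * b * y * u * k)) / (-2 * φ * φn * u * k)
      = bestResponse φ ψ b y φn (u * k) := by
  have hsq := sq_sqrt hA
  have hden : √(φ ^ 2 * b ^ 2 + 2 * φ * ψ * φn * b * y * u * k) + φ * b ≠ 0 := by positivity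
  have hden' : -2 * φ * φn * u * k ≠ 0 := by
    simpa [mul_assoc, hφ.ne', hφn] using huk
  rw [bestResponse, div_eq_div_iff hden' (by simpa [mul_assoc] using hden)]
  simp only [mul_assoc] at hsq ⊢
  linear_combination -hsq

lemma bestResponse_root (hφ : 0 < φ) (hb : 0 < b) (hφn : φn ≠ 0) {t : ℝ}
    (hA : 0 ≤ φ ^ 2 * b ^ 2 + 2 * φ * ψ * φn * b * y * t) :
    ψ * y * b / (2 * φ * φn)
      = b / φn * bestResponse φ ψ b y φn t + t * bestResponse φ ψ b y φn t ^ 2 := by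
  have hsq := sq_sqrt hA
  have hden : √(φ ^ 2 * b ^ 2 + 2 * φ * ψ * φn * b * y * t) + φ * b ≠ 0 := by positivity
  rw [bestResponse]
  generalize √(φ ^ 2 * b ^ 2 + 2 * φ * ψ * φn * b * y * t) = u at hsq hden ⊢
  field_simp
  rw [eq_div_iff (pow_ne_zero 2 (by rwa [mul_comm b φ]))]
  linear_combination ψ * y * hsq

end BestResponse

lemma eq_min_of_isMaxOn {G : ℝ → ℝ} {a c r s : ℝ} (hinc : StrictMonoOn G (Icc a r))
    (hdec : StrictAntiOn G (Ici r)) (har : a ≤ r) (hs : s ∈ Icc a c)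
    (hmax : IsMaxOn G (Icc a c) s) : s = min c r := by
  have hp : min c r ∈ Icc a c := ⟨le_min (hs.1.trans hs.2) har, min_le_left c r⟩
  rcases lt_trichotomy s (min c r) with hlt | heq | hgt
  · exact absurd (hmax hp) (hinc ⟨hs.1, hlt.le.trans (min_le_right c r)⟩
      ⟨hp.1, min_le_right c r⟩ hlt).not_ge
  · exact heq
  · have hrc : r < c := not_le.mp fun hcr => by
      rw [min_eq_left hcr] at hgt; exact hgt.not_ge hs.2
    rw [min_eq_right hrc.le] at hgt hp
    exact absurd (hmax hp) (hdec self_mem_Ici hgt.le hgt).not_ge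

noncomputable def logPotential (α β s : ℝ) : ℝ := -α / s - β * Real.log s

lemma hasDerivAt_logPotential (α β : ℝ) {x : ℝ} (hx : 0 < x) :
    HasDerivAt (logPotential α β) (α / x ^ 2 - β / x) x := by
  have h1 : HasDerivAt (fun s : ℝ => -α / s) (α / x ^ 2) x := by
    simpa [div_eq_mul_inv] using (hasDerivAt_inv hx.ne').const_mul (-α)
  have h2 : HasDerivAt (fun s : ℝ => β * Real.log s) (β / x) x := by
    simpa [div_eq_mul_inv] using (Real.hasDerivAt_log hx.ne').const_mul β
  exact h1.sub h2

section Payoff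

variable {α β w r : ℝ}

lemma hasDerivAt_payoff (hr : α = β * r + w * r ^ 2) {x : ℝ} (hx : 0 < x) :
    HasDerivAt (fun s => logPotential α β s - s * w) ((r - x) * (β + w * (x + r)) / x ^ 2) x := by
  have hderiv : α / x ^ 2 - β / x - w = (r - x) * (β + w * (x + r)) / x ^ 2 := by
    field_simp
    rw [hr]
    ring
  rw [← hderiv]
  exact (hasDerivAt_logPotential α β hx).fun_sub (hasDerivAt_mul_const w)

lemma strictMonoOn_payoff (hβ : 0 < β) (hw : 0 ≤ w) (hr : α = β * r + w * r ^ 2) {a : ℝ}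
    (ha : 0 < a) : StrictMonoOn (fun s => logPotential α β s - s * w) (Icc a r) := by
  refine strictMonoOn_of_deriv_pos (convex_Icc a r)
    (fun x hx => (hasDerivAt_payoff hr (ha.trans_le hx.1)).continuousAt.continuousWithinAt)
    fun x hx => ?_
  rw [interior_Icc] at hx
  have hx0 : 0 < x := ha.trans hx.1
  rw [(hasDerivAt_payoff hr hx0).deriv]
  have hr0 : 0 < r := hx0.trans hx.2
  exact div_pos (mul_pos (sub_pos.mpr hx.2) (by positivity)) (by positivity)

lemma strictAntiOn_payoff (hβ : 0 < β) (hw : 0 ≤ w) (hr : α = β * r + w * r ^ 2)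
    (hr0 : 0 < r) : StrictAntiOn (fun s => logPotential α β s - s * w) (Ici r) := by
  refine strictAntiOn_of_deriv_neg (convex_Ici r)
    (fun x hx => (hasDerivAt_payoff hr (hr0.trans_le hx)).continuousAt.continuousWithinAt)
    fun x hx => ?_
  rw [interior_Ici] at hx
  have hx0 : 0 < x := hr0.trans hx
  rw [(hasDerivAt_payoff hr hx0).deriv]
  have : 0 < β + w * (x + r) := by positivity
  exact div_neg_of_neg_of_pos (mul_neg_of_neg_of_pos (sub_neg.mpr hx) this) (by positivity)

end Payoff

lemma update_eq_add_single {n : Type*} [DecidableEq n] (h : n → ℝ) (i : n) (s : ℝ) :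
    Function.update h i s = h + Pi.single i (s - h i) := by
  ext j
  rcases eq_or_ne j i with rfl | hj <;> simp [*]

lemma dotProduct_mulVec_update {n : Type*} [Fintype n] [DecidableEq n] {A : Matrix n n ℝ}
    (hA : A.IsSymm) (hdiag : ∀ i, A i i = 0) (h : n → ℝ) (i : n) (s : ℝ) :
    Function.update h i s ⬝ᵥ A *ᵥ Function.update h i s
      = h ⬝ᵥ A *ᵥ h + 2 * (s - h i) * (A *ᵥ h) i := by
  have hcross : h ⬝ᵥ A *ᵥ Pi.single i (s - h i) = (s - h i) * (A *ᵥ h) i := by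
    rw [dotProduct_mulVec, ← vecMul_transpose, hA.eq, dotProduct_single, mul_comm]
  have hsingle : Pi.single i (s - h i) ⬝ᵥ A *ᵥ Pi.single i (s - h i) = 0 := by
    simp [single_dotProduct, mulVec_single, hdiag]
  rw [update_eq_add_single, mulVec_add, add_dotProduct, dotProduct_add, dotProduct_add, hcross,
    hsingle, single_dotProduct]
  ring

noncomputable def potential {n : Type*} [Fintype n] (F : ℝ → ℝ) (A : Matrix n n ℝ)
    (h : n → ℝ) : ℝ :=
  ∑ i, F (h i) - h ⬝ᵥ A *ᵥ h / 2

lemma potential_update {n : Type*} [Fintype n] [DecidableEq n] (F : ℝ → ℝ) {A : Matrix n n ℝ}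
    (hA : A.IsSymm) (hdiag : ∀ i, A i i = 0) (h : n → ℝ) (i : n) (s : ℝ) :
    potential F A (Function.update h i s)
      = potential F A h + (F s - s * (A *ᵥ h) i) - (F (h i) - h i * (A *ᵥ h) i) := by
  have hsum : ∑ j, F (Function.update h i s j) = ∑ j, F (h j) - F (h i) + F s := by
    simp only [Function.apply_update (fun _ => F), Finset.sum_update_of_mem (Finset.mem_univ i),
      ← Finset.sum_erase_eq_sub (Finset.mem_univ i), Finset.sdiff_singleton_eq_erase]
    ring
  rw [potential, potential, hsum, dotProduct_mulVec_update hA hdiag]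
  ring

lemma isMaxOn_update_of_isMaxOn {n : Type*} [DecidableEq n] {f : (n → ℝ) → ℝ} {a c x : n → ℝ}
    (hx : x ∈ Icc a c) (hmax : IsMaxOn f (Icc a c) x) (i : n) :
    IsMaxOn (fun s => f (Function.update x i s)) (Icc (a i) (c i)) (x i) := by
  intro s hs
  have hmem : Function.update x i s ∈ Icc a c := by
    constructor <;> intro j <;> rcases eq_or_ne j i with rfl | hj <;> simp_all [hx.1 j, hx.2 j]
  simpa using hmax hmem

lemma isMaxOn_payoff_of_isMaxOn_potential {n : Type*} [Fintype n] [DecidableEq n]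
    {F : ℝ → ℝ} {A : Matrix n n ℝ} (hA : A.IsSymm) (hdiag : ∀ i, A i i = 0) {a c x : n → ℝ}
    (hx : x ∈ Icc a c) (hmax : IsMaxOn (potential F A) (Icc a c) x) (i : n) :
    IsMaxOn (fun s => F s - s * (A *ᵥ x) i) (Icc (a i) (c i)) (x i) := by
  intro s hs
  have hle := isMaxOn_update_of_isMaxOn hx hmax i hs
  simp only [mem_ofPred_eq, potential_update F hA hdiag, Function.update_eq_self] at hle ⊢
  linarith

lemma continuousOn_potential {n : Type*} [Fintype n] {F : ℝ → ℝ} {s : Set ℝ}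
    (hF : ContinuousOn F s) (A : Matrix n n ℝ) :
    ContinuousOn (potential F A) (univ.pi fun _ => s) :=
  (continuousOn_finsetSum _ fun i _ =>
    hF.comp (continuous_apply i).continuousOn fun _ hh => mem_univ_pi.mp hh i).sub
    ((continuous_id.dotProduct (continuous_const.matrix_mulVec continuous_id)).div_const
      2).continuousOn

lemma continuousOn_logPotential (α β : ℝ) : ContinuousOn (logPotential α β) (Ioi 0) :=
  fun _ hx => (hasDerivAt_logPotential α β hx).continuousAt.continuousWithinAt

theorem exists_eq_min_one_bestResponse {V : Type*} [Fintype V] [DecidableEq V]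
    (G : SimpleGraph V) [DecidableRel G.Adj] {φ ψ b y φn : ℝ} (hφ : 0 < φ) (hψ : 0 < ψ)
    (hb : 0 < b) (hy : 0 < y) (hφn : 0 < φn) :
    ∃ h ∈ Icc (0 : V → ℝ) 1,
      ∀ i, min 1 (bestResponse φ ψ b y φn (∑ j ∈ G.neighborFinset i, h j)) = h i := by
  set ρ := bestResponse φ ψ b y φn
  set δ := min 1 (ρ (Fintype.card V))
  have hδ : 0 < δ := lt_min one_pos (bestResponse_pos hφ hψ hb hy _)
  have hβ : 0 < b / φn := by positivity
  obtain ⟨x, hx, hmax⟩ := isCompact_Icc.exists_isMaxOn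
    (nonempty_Icc.mpr fun _ => min_le_left _ _)
    ((continuousOn_potential (continuousOn_logPotential (ψ * y * b / (2 * φ * φn)) (b / φn))
      (G.adjMatrix ℝ)).mono fun h hh i _ => hδ.trans_le (hh.1 i))
  have hx0 : 0 ≤ x := fun i => hδ.le.trans (hx.1 i)
  refine ⟨x, ⟨hx0, hx.2⟩, fun i => ?_⟩
  rw [← G.adjMatrix_mulVec_apply]
  set S := (G.adjMatrix ℝ *ᵥ x) i with hS
  have hS0 : 0 ≤ S := by
    rw [hS, G.adjMatrix_mulVec_apply]; exact sum_nonneg fun j _ => hx0 j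
  have hSV : S ≤ Fintype.card V := calc
    S ≤ ∑ _j ∈ G.neighborFinset i, (1 : ℝ) := by
      rw [hS, G.adjMatrix_mulVec_apply]; exact sum_le_sum fun j _ => hx.2 j
    _ ≤ Fintype.card V := by simpa using card_le_univ (G.neighborFinset i)
  have hroot := bestResponse_root (ψ := ψ) (y := y) hφ hb hφn.ne' (t := S) (by positivity)
  refine (eq_min_of_isMaxOn (strictMonoOn_payoff hβ hS0 hroot hδ)
    (strictAntiOn_payoff hβ hS0 hroot (bestResponse_pos hφ hψ hb hy S))
    ((min_le_right _ _).trans (antitone_bestResponse hφ hψ hb hy hφn hSV))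
    ⟨hx.1 i, hx.2 i⟩ ?_).symm
  exact isMaxOn_payoff_of_isMaxOn_potential G.isSymm_adjMatrix (fun j => by simp) hx hmax i

theorem stmt_11_general {N : ℕ} (G : SimpleGraph (Fin N)) [DecidableRel G.Adj]
    (φ ψ b y φn : ℝ) (hφ : 0 < φ) (hψ : 0 < ψ) (hb : 0 < b) (hy : 0 < y)
    (hφn : 0 < φn)
    (hbar : (Fin N → ℝ) → Fin N → ℝ)
    (hhbar : ∀ h i, hbar h i = (1 / (G.degree i : ℝ)) * ∑ j ∈ G.neighborFinset i, h j)
    (T : (Fin N → ℝ) → Fin N → ℝ)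
    (hT : ∀ h i, T h i =
      if hbar h i = 0 then min 1 (ψ * y / (2 * φ))
      else min 1 ((φ * b - Real.sqrt (φ ^ 2 * b ^ 2 +
          2 * φ * ψ * φn * b * y * hbar h i * (G.degree i : ℝ)))
        / (-2 * φ * φn * hbar h i * (G.degree i : ℝ)))) :
    ContinuousOn T (Set.Icc (0 : Fin N → ℝ) 1) ∧
    ∃ h ∈ Set.Icc (0 : Fin N → ℝ) 1, T h = h := by
  have hT' : ∀ h ∈ Icc (0 : Fin N → ℝ) 1,
      T h = fun i => min 1 (bestResponse φ ψ b y φn (∑ j ∈ G.neighborFinset i, h j)) := by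
    intro h hh
    ext i
    have hS0 : 0 ≤ ∑ j ∈ G.neighborFinset i, h j := sum_nonneg fun j _ => hh.1 j
    -- at an isolated vertex `hbar h i = 1 / 0 * 0 = 0` and the neighbour sum is empty
    have hS : hbar h i * G.degree i = ∑ j ∈ G.neighborFinset i, h j := by
      rcases eq_or_ne (G.degree i) 0 with hk | hk
      · have hN : G.neighborFinset i = ∅ := by
          rwa [← card_eq_zero, G.card_neighborFinset_eq_degree]
        simp [hk, hN]
      · rw [hhbar]; field_simp
    rw [hT, ← hS]
    split_ifs with h0
    · rw [h0, zero_mul, bestResponse_zero hφ hb]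
    · have hk : (G.degree i : ℝ) ≠ 0 := fun hk => h0 (by rw [hhbar, hk, div_zero, zero_mul])
      rw [div_eq_bestResponse hφ hb hφn.ne' (mul_ne_zero h0 hk)
        (by rw [mul_assoc _ (hbar h i), hS]; positivity)]
  obtain ⟨h, hh, hfix⟩ := exists_eq_min_one_bestResponse G hφ hψ hb hy hφn
  refine ⟨ContinuousOn.congr ?_ hT', h, hh, (hT' h hh).trans (funext hfix)⟩
  exact (continuous_pi fun i => continuous_const.min ((continuous_bestResponse hφ hb).comp
    (continuous_finsetSum _ fun j _ => continuous_apply j))).continuousOn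

theorem stmt_11 {N : ℕ} (G : SimpleGraph (Fin N)) [DecidableRel G.Adj]
    (hdeg : ∀ i, 1 ≤ G.degree i)
    (φ ψ b y φn : ℝ) (hφ : 0 < φ) (hψ : 0 < ψ) (hb : 0 < b) (hy : 0 < y)
    (hφn : 0 < φn)
    (hbar : (Fin N → ℝ) → Fin N → ℝ)
    (hhbar : ∀ h i, hbar h i = (1 / (G.degree i : ℝ)) * ∑ j ∈ G.neighborFinset i, h j)
    (T : (Fin N → ℝ) → Fin N → ℝ)
    (hT : ∀ h i, T h i =
      if hbar h i = 0 then min 1 (ψ * y / (2 * φ))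
      else min 1 ((φ * b - Real.sqrt (φ ^ 2 * b ^ 2 +
          2 * φ * ψ * φn * b * y * hbar h i * (G.degree i : ℝ)))
        / (-2 * φ * φn * hbar h i * (G.degree i : ℝ)))) :
    ContinuousOn T (Set.Icc (0 : Fin N → ℝ) 1) ∧
    ∃ h ∈ Set.Icc (0 : Fin N → ℝ) 1, T h = h :=
  stmt_11_general G φ ψ b y φn hφ hψ hb hy hφn hbar hhbar T hT
end
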